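/- (Fixed point of the iterated best response satisfies modified KKT stationarity implies Nash KKT stationarity.) Suppose (σ₁^l, σ₂^l) together with multipliers (μ_i^l, ν_i^l, λ_i^l) satisfies, for each i, the stationarity condition ∂f_i/∂σ_i + α_i λ_j^l ∂γ_j/∂σ_i - λ_i^l ∂γ_i/∂σ_i - μ_i^l ∂h_i/∂σ_i - ν_i^l ∂g_i/∂σ_i = 0 with λ_i^l, ν_i^l ≥ 0, complementary slackness λ_i^l γ_i = 0, ν_i^l g_i = 0, and feasibility. If γ₁ ≡ γ₂ as functions (so also their partial derivatives agree) and λ_i^l ≥ α_i λ_j^l componentwise for both i, then (σ₁^l, σ₂^l) with the modified multipliers λ_i^* = λ_i^l - α_i λ_j^l satisfies the KKT necessary conditions for a Nash equilibrium, namely: ∂f_i/∂σ_i - λ_i^* ∂γ_i/∂σ_i - μ_i^l ∂h_i/∂σ_i - ν_i^l ∂g_i/∂σ_i = 0, λ_i^* ≥ 0, and λ_i^* γ_i(σ_i^l, σ_j^l) = 0. -/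

import Mathlib

open Finset

/-!
Because the joint constraint is shared, player `j`'s constraint `γⱼ(σⱼ, ·)` seen as a function of
`σᵢ` is player `i`'s constraint `γᵢ(·, σⱼ)`. The sensitivity term `αᵢ λⱼ ∂γⱼ/∂σᵢ` of the modified
stationarity condition can therefore be merged with `-λᵢ ∂γᵢ/∂σᵢ` into `-(λᵢ - αᵢ λⱼ) ∂γᵢ/∂σᵢ`,
and `λⱼ γⱼ = 0` becomes `λⱼ γᵢ = 0`, so the same complementary slackness holds for `λᵢ - αᵢ λⱼ`.
-/

section PlayerKKT

variable {M κ : Type*} [AddCommGroup M] [Module ℝ M] [Fintype κ]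

theorem sum_sub_mul_smul_eq (a b : κ → ℝ) (α : ℝ) (G : κ → M) :
    ∑ k, (a k - α * b k) • G k = ∑ k, a k • G k - α • ∑ k, b k • G k := by
  simp only [sub_smul, mul_smul, sum_sub_distrib, smul_sum]

theorem stationarity_of_sensitivity_merge {D X Y : M} {G : κ → M} {a b : κ → ℝ} {α : ℝ}
    (hstat : D + α • ∑ k, b k • G k - ∑ k, a k • G k - X - Y = 0) :
    D - ∑ k, (a k - α * b k) • G k - X - Y = 0 := by
  rw [sum_sub_mul_smul_eq, ← hstat]
  abel

theorem complementary_slackness_sub_mul {a b γ : ℝ} (α : ℝ)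
    (ha : a * γ = 0) (hb : b * γ = 0) : (a - α * b) * γ = 0 := by
  linear_combination ha - α * hb

end PlayerKKT

theorem ibr_fixed_point_nash_kkt_general {n m q : ℕ}
    (f₁ f₂ : EuclideanSpace ℝ (Fin n) → ℝ)
    (h₁ h₂ g₁ g₂ : EuclideanSpace ℝ (Fin n) → Fin m → ℝ)
    (γ₁ γ₂ : EuclideanSpace ℝ (Fin n) → EuclideanSpace ℝ (Fin n) → Fin q → ℝ)
    (α₁ α₂ : ℝ)
    (σ₁ σ₂ : EuclideanSpace ℝ (Fin n))
    (μ₁ μ₂ : Fin m → ℝ) (ν₁ ν₂ : Fin m → ℝ) (lam₁ lam₂ : Fin q → ℝ)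
    -- shared joint constraints (own strategy first in each player's constraint map)
    (hγ : ∀ a b, γ₁ a b = γ₂ b a)
    -- complementary slackness of the modified problems (componentwise)
    (hcslam₁ : ∀ k, lam₁ k * γ₁ σ₁ σ₂ k = 0) (hcslam₂ : ∀ k, lam₂ k * γ₂ σ₂ σ₁ k = 0)
    -- stationarity of the modified problems
    (hstat₁ : fderiv ℝ f₁ σ₁
        + α₁ • ∑ k, lam₂ k • fderiv ℝ (fun σ => γ₂ σ₂ σ k) σ₁
        - ∑ k, lam₁ k • fderiv ℝ (fun σ => γ₁ σ σ₂ k) σ₁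
        - ∑ k, μ₁ k • fderiv ℝ (fun σ => h₁ σ k) σ₁
        - ∑ k, ν₁ k • fderiv ℝ (fun σ => g₁ σ k) σ₁ = 0)
    (hstat₂ : fderiv ℝ f₂ σ₂
        + α₂ • ∑ k, lam₁ k • fderiv ℝ (fun σ => γ₁ σ₁ σ k) σ₂
        - ∑ k, lam₂ k • fderiv ℝ (fun σ => γ₂ σ σ₁ k) σ₂
        - ∑ k, μ₂ k • fderiv ℝ (fun σ => h₂ σ k) σ₂
        - ∑ k, ν₂ k • fderiv ℝ (fun σ => g₂ σ k) σ₂ = 0)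
    -- λᵢ ≥ αᵢ λⱼ componentwise
    (hdom₁ : ∀ k, α₁ * lam₂ k ≤ lam₁ k) (hdom₂ : ∀ k, α₂ * lam₁ k ≤ lam₂ k) :
    -- the modified multipliers λᵢ* = λᵢ - αᵢ λⱼ satisfy the Nash KKT conditions
    (fderiv ℝ f₁ σ₁
        - ∑ k, (lam₁ k - α₁ * lam₂ k) • fderiv ℝ (fun σ => γ₁ σ σ₂ k) σ₁
        - ∑ k, μ₁ k • fderiv ℝ (fun σ => h₁ σ k) σ₁
        - ∑ k, ν₁ k • fderiv ℝ (fun σ => g₁ σ k) σ₁ = 0) ∧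
    (fderiv ℝ f₂ σ₂
        - ∑ k, (lam₂ k - α₂ * lam₁ k) • fderiv ℝ (fun σ => γ₂ σ σ₁ k) σ₂
        - ∑ k, μ₂ k • fderiv ℝ (fun σ => h₂ σ k) σ₂
        - ∑ k, ν₂ k • fderiv ℝ (fun σ => g₂ σ k) σ₂ = 0) ∧
    (∀ k, 0 ≤ lam₁ k - α₁ * lam₂ k) ∧ (∀ k, 0 ≤ lam₂ k - α₂ * lam₁ k) ∧
    (∀ k, (lam₁ k - α₁ * lam₂ k) * γ₁ σ₁ σ₂ k = 0) ∧
    (∀ k, (lam₂ k - α₂ * lam₁ k) * γ₂ σ₂ σ₁ k = 0) := by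
  have hshared₁ : ∀ k, (fun σ => γ₂ σ₂ σ k) = fun σ => γ₁ σ σ₂ k :=
    fun k => funext fun σ => by rw [hγ]
  have hshared₂ : ∀ k, (fun σ => γ₁ σ₁ σ k) = fun σ => γ₂ σ σ₁ k :=
    fun k => funext fun σ => by rw [hγ]
  simp only [hshared₁] at hstat₁
  simp only [hshared₂] at hstat₂
  refine ⟨stationarity_of_sensitivity_merge hstat₁, stationarity_of_sensitivity_merge hstat₂,
    fun k => sub_nonneg.2 (hdom₁ k), fun k => sub_nonneg.2 (hdom₂ k), fun k => ?_, fun k => ?_⟩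
  · exact complementary_slackness_sub_mul α₁ (hcslam₁ k) (by rw [hγ]; exact hcslam₂ k)
  · exact complementary_slackness_sub_mul α₂ (hcslam₂ k) (by rw [← hγ]; exact hcslam₁ k)

/-- A fixed point of the iterated best response scheme satisfying the KKT conditions of the
sensitivity-modified problems, with shared joint constraints (`γ₁(σᵢ,σⱼ) = γ₂(σⱼ,σᵢ)`, each
player's own strategy listed first) and `λᵢ ≥ αᵢ λⱼ` componentwise, satisfies — with the
modified multipliers `λᵢ* = λᵢ - αᵢ λⱼ` — the KKT necessary conditions for a Nash
equilibrium: stationarity, nonnegativity, and complementary slackness. -/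
theorem ibr_fixed_point_nash_kkt {n m q : ℕ}
    (f₁ f₂ : EuclideanSpace ℝ (Fin n) → ℝ)
    (h₁ h₂ g₁ g₂ : EuclideanSpace ℝ (Fin n) → Fin m → ℝ)
    (γ₁ γ₂ : EuclideanSpace ℝ (Fin n) → EuclideanSpace ℝ (Fin n) → Fin q → ℝ)
    (α₁ α₂ : ℝ) (hα₁ : 0 ≤ α₁) (hα₂ : 0 ≤ α₂)
    (σ₁ σ₂ : EuclideanSpace ℝ (Fin n))
    (μ₁ μ₂ : Fin m → ℝ) (ν₁ ν₂ : Fin m → ℝ) (lam₁ lam₂ : Fin q → ℝ)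
    -- shared joint constraints (own strategy first in each player's constraint map)
    (hγ : ∀ a b, γ₁ a b = γ₂ b a)
    -- multiplier sign conditions of the modified problems
    (hν₁ : ∀ k, 0 ≤ ν₁ k) (hν₂ : ∀ k, 0 ≤ ν₂ k)
    (hlam₁ : ∀ k, 0 ≤ lam₁ k) (hlam₂ : ∀ k, 0 ≤ lam₂ k)
    -- feasibility
    (hh₁ : ∀ k, h₁ σ₁ k = 0) (hh₂ : ∀ k, h₂ σ₂ k = 0)
    (hg₁ : ∀ k, g₁ σ₁ k ≤ 0) (hg₂ : ∀ k, g₂ σ₂ k ≤ 0)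
    (hγ₁ : ∀ k, γ₁ σ₁ σ₂ k ≤ 0) (hγ₂ : ∀ k, γ₂ σ₂ σ₁ k ≤ 0)
    -- complementary slackness of the modified problems (componentwise)
    (hcslam₁ : ∀ k, lam₁ k * γ₁ σ₁ σ₂ k = 0) (hcslam₂ : ∀ k, lam₂ k * γ₂ σ₂ σ₁ k = 0)
    (hcsν₁ : ∀ k, ν₁ k * g₁ σ₁ k = 0) (hcsν₂ : ∀ k, ν₂ k * g₂ σ₂ k = 0)
    -- stationarity of the modified problems
    (hstat₁ : fderiv ℝ f₁ σ₁
        + α₁ • ∑ k, lam₂ k • fderiv ℝ (fun σ => γ₂ σ₂ σ k) σ₁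
        - ∑ k, lam₁ k • fderiv ℝ (fun σ => γ₁ σ σ₂ k) σ₁
        - ∑ k, μ₁ k • fderiv ℝ (fun σ => h₁ σ k) σ₁
        - ∑ k, ν₁ k • fderiv ℝ (fun σ => g₁ σ k) σ₁ = 0)
    (hstat₂ : fderiv ℝ f₂ σ₂
        + α₂ • ∑ k, lam₁ k • fderiv ℝ (fun σ => γ₁ σ₁ σ k) σ₂
        - ∑ k, lam₂ k • fderiv ℝ (fun σ => γ₂ σ σ₁ k) σ₂
        - ∑ k, μ₂ k • fderiv ℝ (fun σ => h₂ σ k) σ₂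
        - ∑ k, ν₂ k • fderiv ℝ (fun σ => g₂ σ k) σ₂ = 0)
    -- λᵢ ≥ αᵢ λⱼ componentwise
    (hdom₁ : ∀ k, α₁ * lam₂ k ≤ lam₁ k) (hdom₂ : ∀ k, α₂ * lam₁ k ≤ lam₂ k) :
    -- the modified multipliers λᵢ* = λᵢ - αᵢ λⱼ satisfy the Nash KKT conditions
    (fderiv ℝ f₁ σ₁
        - ∑ k, (lam₁ k - α₁ * lam₂ k) • fderiv ℝ (fun σ => γ₁ σ σ₂ k) σ₁
        - ∑ k, μ₁ k • fderiv ℝ (fun σ => h₁ σ k) σ₁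
        - ∑ k, ν₁ k • fderiv ℝ (fun σ => g₁ σ k) σ₁ = 0) ∧
    (fderiv ℝ f₂ σ₂
        - ∑ k, (lam₂ k - α₂ * lam₁ k) • fderiv ℝ (fun σ => γ₂ σ σ₁ k) σ₂
        - ∑ k, μ₂ k • fderiv ℝ (fun σ => h₂ σ k) σ₂
        - ∑ k, ν₂ k • fderiv ℝ (fun σ => g₂ σ k) σ₂ = 0) ∧
    (∀ k, 0 ≤ lam₁ k - α₁ * lam₂ k) ∧ (∀ k, 0 ≤ lam₂ k - α₂ * lam₁ k) ∧
    (∀ k, (lam₁ k - α₁ * lam₂ k) * γ₁ σ₁ σ₂ k = 0) ∧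
    (∀ k, (lam₂ k - α₂ * lam₁ k) * γ₂ σ₂ σ₁ k = 0) :=
  ibr_fixed_point_nash_kkt_general f₁ f₂ h₁ h₂ g₁ g₂ γ₁ γ₂ α₁ α₂ σ₁ σ₂ μ₁ μ₂ ν₁ ν₂ lam₁ lam₂ hγ
    hcslam₁ hcslam₂ hstat₁ hstat₂ hdom₁ hdom₂
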